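/- For every x ∈ ℝ^d with nonnegative coordinates, every real p ≥ 2, every u ∈ ℝ and every index k, |‖x + u e_k‖_p - ‖x‖_p| ≤ p |u| ((x_k + |u|) / (2‖x‖_p^p + |u|^p)^{1/p})^{p-1}, provided x + u e_k also has nonnegative coordinates. -/

import Mathlib

/-! Along the `k`-th coordinate the `ℓ^p` norm is `N t = (A + t ^ p) ^ (1 / p)`, where `A` is the
`p`-th power mass of the other coordinates. Hölder's inequality gives
`N s * N t ^ (p - 1) ≥ A + s * t ^ (p - 1)`, i.e. `N` lies above its tangents, so
`|N t - N s| ≤ |t - s| * (m / N m) ^ (p - 1)` with `m = max s t`. Superadditivity of `r ↦ r ^ p`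
gives `D * m ^ p ≤ 2 * N m ^ p * (s + |t - s|) ^ p` for `D = 2 * N s ^ p + |t - s| ^ p`, and
the factor `2 ^ ((p - 1) / p) ≤ 2 ≤ p` is absorbed by `p`. -/

/-- The ℓ^p norm of a vector in ℝ^d, using real powers. -/
noncomputable def lpNorm {d : ℕ} (p : ℝ) (x : Fin d → ℝ) : ℝ :=
  (∑ k : Fin d, |x k| ^ p) ^ (1 / p)

open Real Finset

lemma add_mul_le_Lp_mul_Lq_of_nonneg {p q A s T : ℝ} (hpq : p.HolderConjugate q) (hA : 0 ≤ A)
    (hs : 0 ≤ s) (hT : 0 ≤ T) :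
    A + s * T ≤ (A + s ^ p) ^ (1 / p) * (A + T ^ q) ^ (1 / q) := by
  have holder := inner_le_Lp_mul_Lq_of_nonneg (univ : Finset (Fin 2))
    (f := ![A ^ (1 / p), s]) (g := ![A ^ (1 / q), T]) hpq
    (by intro i _; fin_cases i <;> simp [rpow_nonneg hA, hs])
    (by intro i _; fin_cases i <;> simp [rpow_nonneg hA, hT])
  have hA1 : A ^ p⁻¹ * A ^ q⁻¹ = A := by
    rw [← rpow_add' hA (by simp [hpq.inv_add_inv_eq_one]), hpq.inv_add_inv_eq_one, rpow_one]
  simpa [Fin.sum_univ_two, hA1, ← rpow_mul hA, hpq.ne_zero, hpq.symm.ne_zero] using holder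

/-- The map `t ↦ (A + t ^ p) ^ (1 / p)` lies above its tangent at `t`. -/
lemma rpow_sub_one_mul_sub_le {p A s t : ℝ} (hp : 1 < p) (hA : 0 ≤ A) (hs : 0 ≤ s)
    (ht : 0 ≤ t) :
    ((A + t ^ p) ^ (1 / p)) ^ (p - 1) * ((A + t ^ p) ^ (1 / p) - (A + s ^ p) ^ (1 / p)) ≤
      (t - s) * t ^ (p - 1) := by
  have hp0 : p ≠ 0 := by positivity
  have hp1 : p - 1 ≠ 0 := sub_ne_zero.2 hp.ne'
  have hB : 0 ≤ A + t ^ p := by positivity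
  have holder := add_mul_le_Lp_mul_Lq_of_nonneg (Real.HolderConjugate.conjExponent hp) hA hs
    (rpow_nonneg ht (p - 1))
  have hTq : (t ^ (p - 1)) ^ p.conjExponent = t ^ p := by
    rw [← rpow_mul ht, conjExponent]; field_simp
  have hBq : (A + t ^ p) ^ (1 / p.conjExponent) = ((A + t ^ p) ^ (1 / p)) ^ (p - 1) := by
    rw [← rpow_mul hB, conjExponent]; field_simp
  have hBp : ((A + t ^ p) ^ (1 / p)) ^ (p - 1) * (A + t ^ p) ^ (1 / p) = A + t ^ p := by
    rw [← rpow_mul hB, ← rpow_add' hB (by field_simp; simpa using hp0)]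
    field_simp
    rw [sub_add_cancel, div_self hp0, rpow_one]
  have htp : t ^ p = t * t ^ (p - 1) := by
    rw [← rpow_one_add' ht (by simpa using hp0)]; ring_nf
  rw [hTq, hBq] at holder
  rw [mul_sub, hBp]
  nlinarith

lemma abs_sub_mul_rpow_max_le {p A s t : ℝ} (hp : 1 < p) (hA : 0 ≤ A) (hs : 0 ≤ s)
    (ht : 0 ≤ t) :
    |(A + t ^ p) ^ (1 / p) - (A + s ^ p) ^ (1 / p)| *
        ((A + max s t ^ p) ^ (1 / p)) ^ (p - 1) ≤ |t - s| * max s t ^ (p - 1) := by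
  wlog hst : s ≤ t generalizing s t
  · rw [abs_sub_comm, abs_sub_comm t, max_comm]
    exact this ht hs (le_of_not_ge hst)
  have hmono : (A + s ^ p) ^ (1 / p) ≤ (A + t ^ p) ^ (1 / p) := by
    gcongr
  rw [max_eq_right hst, abs_of_nonneg (sub_nonneg.2 hmono), abs_of_nonneg (sub_nonneg.2 hst),
    mul_comm]
  exact rpow_sub_one_mul_sub_le hp hA hs ht

lemma mul_rpow_le_two_mul {p A s v m : ℝ} (hp : 1 ≤ p) (hA : 0 ≤ A) (hs : 0 ≤ s) (hv : 0 ≤ v)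
    (hm : 0 ≤ m) (hmsv : m ≤ s + v) :
    (2 * (A + s ^ p) + v ^ p) * m ^ p ≤ 2 * ((A + m ^ p) * (s + v) ^ p) := by
  have hmp : m ^ p ≤ (s + v) ^ p := by gcongr
  have hsup : s ^ p + v ^ p ≤ (s + v) ^ p := add_rpow_le_rpow_add hs hv hp
  have := rpow_nonneg hm p
  have := rpow_nonneg hs p
  have := rpow_nonneg hv p
  nlinarith

lemma rpow_sub_one_le_two_mul_of_rpow_le {p a b : ℝ} (hp : 1 ≤ p) (ha : 0 ≤ a) (hb : 0 ≤ b)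
    (h : a ^ p ≤ 2 * b ^ p) : a ^ (p - 1) ≤ 2 * b ^ (p - 1) := by
  have hp0 : 0 < p := by linarith
  have hpow : ∀ c : ℝ, 0 ≤ c → (c ^ p) ^ ((p - 1) / p) = c ^ (p - 1) := fun c hc => by
    rw [← rpow_mul hc]; field_simp
  calc a ^ (p - 1) = (a ^ p) ^ ((p - 1) / p) := (hpow a ha).symm
    _ ≤ (2 * b ^ p) ^ ((p - 1) / p) := by gcongr
    _ = 2 ^ ((p - 1) / p) * b ^ (p - 1) := by
      rw [mul_rpow two_pos.le (by positivity), hpow b hb]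
    _ ≤ 2 * b ^ (p - 1) := by
      gcongr
      exact rpow_le_self_of_one_le one_le_two ((div_le_one hp0).2 (by linarith))

theorem abs_rpow_add_rpow_sub_le {p A s t : ℝ} (hp : 2 ≤ p) (hA : 0 ≤ A) (hs : 0 ≤ s)
    (ht : 0 ≤ t) :
    |(A + t ^ p) ^ (1 / p) - (A + s ^ p) ^ (1 / p)| ≤
      p * |t - s| * ((s + |t - s|) / (2 * (A + s ^ p) + |t - s| ^ p) ^ (1 / p)) ^ (p - 1) := by
  rcases eq_or_ne t s with rfl | hts
  · simp
  have hp0 : 0 < p := by linarith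
  set v := |t - s|
  set m := max s t
  set D := 2 * (A + s ^ p) + v ^ p
  set M := (A + m ^ p) ^ (1 / p)
  set Δ := (A + t ^ p) ^ (1 / p) - (A + s ^ p) ^ (1 / p)
  have hv : 0 < v := abs_pos.2 (sub_ne_zero.2 hts)
  have hm : 0 < m := by
    rcases hs.lt_or_eq with hs | rfl
    · exact lt_max_of_lt_left hs
    · exact lt_max_of_lt_right (ht.lt_of_ne hts.symm)
  have hmsv : m ≤ s + v := max_le (by linarith) (by linarith [le_abs_self (t - s)])
  have hM : 0 < M := by positivity
  have hD : 0 < D := by positivity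
  have htangent := abs_sub_mul_rpow_max_le (p := p) (by linarith) hA hs ht
  have hscale : (D ^ (1 / p) * m) ^ (p - 1) ≤ p * (M * (s + v)) ^ (p - 1) := by
    refine (rpow_sub_one_le_two_mul_of_rpow_le (by linarith) (by positivity) (by positivity)
      ?_).trans (mul_le_mul_of_nonneg_right (by linarith) (by positivity))
    have hinv : ∀ c : ℝ, 0 ≤ c → (c ^ (1 / p)) ^ p = c := fun c hc => by
      rw [one_div, rpow_inv_rpow hc hp0.ne']
    rw [mul_rpow (by positivity) hm.le, mul_rpow hM.le (by positivity), hinv D hD.le,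
      hinv _ (by positivity)]
    exact mul_rpow_le_two_mul (by linarith) hA hs hv.le hm.le hmsv
  rw [div_rpow (by positivity) (by positivity), mul_div_assoc', le_div_iff₀ (by positivity)]
  refine le_of_mul_le_mul_right ?_ (rpow_pos_of_pos hM (p - 1))
  calc |Δ| * (D ^ (1 / p)) ^ (p - 1) * M ^ (p - 1)
      = |Δ| * M ^ (p - 1) * (D ^ (1 / p)) ^ (p - 1) := by ring
    _ ≤ v * m ^ (p - 1) * (D ^ (1 / p)) ^ (p - 1) := by gcongr
    _ = v * (D ^ (1 / p) * m) ^ (p - 1) := by rw [mul_rpow (by positivity) hm.le]; ring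
    _ ≤ v * (p * (M * (s + v)) ^ (p - 1)) := by gcongr
    _ = p * v * (s + v) ^ (p - 1) * M ^ (p - 1) := by rw [mul_rpow hM.le (by positivity)]; ring

lemma lpNorm_eq_sum_erase_add {d : ℕ} (p : ℝ) (y : Fin d → ℝ) (k : Fin d) :
    lpNorm p y = (∑ i ∈ univ.erase k, |y i| ^ p + |y k| ^ p) ^ (1 / p) := by
  rw [lpNorm, sum_erase_add _ _ (mem_univ k)]

lemma lpNorm_add_single {d : ℕ} (p : ℝ) (y : Fin d → ℝ) (k : Fin d) (u : ℝ) :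
    lpNorm p (y + Pi.single k u) =
      (∑ i ∈ univ.erase k, |y i| ^ p + |y k + u| ^ p) ^ (1 / p) := by
  rw [lpNorm_eq_sum_erase_add p _ k]
  congr 2
  · exact sum_congr rfl fun i hi => by simp [Pi.single_eq_of_ne (ne_of_mem_erase hi)]
  · simp

lemma lpNorm_rpow {d : ℕ} {p : ℝ} (hp : p ≠ 0) (y : Fin d → ℝ) :
    lpNorm p y ^ p = ∑ i, |y i| ^ p := by
  rw [lpNorm, one_div, rpow_inv_rpow (sum_nonneg fun i _ => by positivity) hp]

theorem stmt_15 (d : ℕ) (x : Fin d → ℝ) (hx : ∀ i, 0 ≤ x i)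
    (p : ℝ) (hp : 2 ≤ p) (u : ℝ) (k : Fin d)
    (hxu : ∀ i, 0 ≤ ((x + Pi.single k u : Fin d → ℝ) i)) :
    |lpNorm p (x + Pi.single k u) - lpNorm p x| ≤
      p * |u| * ((x k + |u|) / (2 * (lpNorm p x) ^ p + |u| ^ p) ^ (1 / p)) ^ (p - 1) := by
  set A := ∑ i ∈ univ.erase k, |x i| ^ p
  have hA : 0 ≤ A := sum_nonneg fun i _ => by positivity
  have hxuk : 0 ≤ x k + u := by simpa using hxu k
  rw [lpNorm_rpow (by positivity) x, ← sum_erase_add _ _ (mem_univ k), lpNorm_add_single,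
    lpNorm_eq_sum_erase_add p x k, abs_of_nonneg hxuk, abs_of_nonneg (hx k)]
  have key := abs_rpow_add_rpow_sub_le hp hA (hx k) hxuk
  rwa [add_sub_cancel_left] at key
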